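/- arXiv:1601.07879 — 2 statements merged into one kernel-verified Lean document; each statement's English description precedes it below -/
import Mathlib

section
/- Let m ≥ 1, 0 < θ < 1, γ > 1, and let A, D be invertible m×m real matrices and B, C be m×m real matrices with ‖A^{-1}‖ ≤ 1/(θγ) and ‖B‖ + ‖C‖ + ‖D^{-1}‖ ≤ 1/θ. Then there exist constants γ̄(m) > 1 and K(m) > 1 depending only on m such that if γ ≥ γ̄(m)/θ⁴, the block matrix M = [[A, B], [C, D]] is invertible, and writing M^{-1} − [[A^{-1}, 0], [0, D^{-1}]] = [[E₁₁, E₁₂], [E₁₂^T, E₂₂]] one has ‖E₁₁‖ ≤ K(m)/(θ⁵γ²), ‖E₁₂‖ ≤ K(m)/(θ³γ), and ‖E₂₂‖ ≤ K(m)/(θ⁵γ). -/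
/-!
Factor the Schur complement as `D - C A⁻¹ B = D (1 - X)` with `X = D⁻¹ C A⁻¹ B`. The hypotheses
give `‖X‖ ≤ 1 / (θ⁴ γ) ≤ 1 / 2`, so by the Neumann series `1 - X` is invertible with
`‖(1 - X)⁻¹‖ ≤ ‖1‖ + 1`. The Schur-complement formula for the inverse of a block matrix writes the
three error blocks as products of `A⁻¹`, `B`, `C`, `D⁻¹` and `(1 - X)⁻¹`, and the Frobenius norm is
submultiplicative, which gives the bounds with `γ̄ = 2` and `K = ‖1‖ + 2 = √m + 2`.
-/

open Matrix

/-- Frobenius norm of a square real matrix. -/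
noncomputable def frob {m : ℕ} (M : Matrix (Fin m) (Fin m) ℝ) : ℝ :=
  Real.sqrt (∑ i, ∑ j, (M i j) ^ 2)

attribute [local instance] frobeniusNormedAddCommGroup frobeniusNormedSpace frobeniusNormedRing

theorem norm_ringInverse_one_sub_le {R : Type*} [NormedRing R] [HasSummableGeomSeries R] {x : R}
    (hx : ‖x‖ ≤ 1 / 2) : ‖Ring.inverse (1 - x)‖ ≤ ‖(1 : R)‖ + 1 := by
  have hx1 : ‖x‖ < 1 := by linarith
  have hinv : (1 - ‖x‖)⁻¹ ≤ 2 := by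
    rw [inv_le_comm₀ (by linarith) two_pos]; linarith
  calc ‖Ring.inverse (1 - x)‖ = ‖∑' n : ℕ, x ^ n‖ := by rw [NormedRing.inverse_one_sub x hx1]; rfl
    _ ≤ ‖(1 : R)‖ - 1 + (1 - ‖x‖)⁻¹ := tsum_geometric_le_of_norm_lt_one x hx1
    _ ≤ ‖(1 : R)‖ + 1 := by linarith

namespace Matrix

section BlockInverse

variable {l n α : Type*} [Fintype l] [Fintype n] [DecidableEq l] [DecidableEq n] [CommRing α]

theorem isUnit_fromBlocks_of_isUnit₁₁ {A : Matrix l l α} {B : Matrix l n α} {C : Matrix n l α}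
    {D : Matrix n n α} (hA : IsUnit A) (hS : IsUnit (D - C * A⁻¹ * B)) :
    IsUnit (fromBlocks A B C D) := by
  obtain ⟨_⟩ := hA.nonempty_invertible
  rwa [isUnit_fromBlocks_iff_of_invertible₁₁, invOf_eq_nonsing_inv]

theorem inv_fromBlocks_of_isUnit₁₁ {A : Matrix l l α} {B : Matrix l n α} {C : Matrix n l α}
    {D : Matrix n n α} (hA : IsUnit A) (hS : IsUnit (D - C * A⁻¹ * B)) :
    (fromBlocks A B C D)⁻¹ =
      fromBlocks (A⁻¹ + A⁻¹ * B * (D - C * A⁻¹ * B)⁻¹ * C * A⁻¹)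
        (-(A⁻¹ * B * (D - C * A⁻¹ * B)⁻¹)) (-((D - C * A⁻¹ * B)⁻¹ * C * A⁻¹))
        (D - C * A⁻¹ * B)⁻¹ := by
  obtain ⟨_⟩ := hA.nonempty_invertible
  rw [← invOf_eq_nonsing_inv A] at hS ⊢
  obtain ⟨_⟩ := hS.nonempty_invertible
  obtain ⟨_⟩ := (isUnit_fromBlocks_iff_of_invertible₁₁.mpr hS).nonempty_invertible
  simp only [← invOf_eq_nonsing_inv, invOf_fromBlocks₁₁_eq]

theorem sub_eq_mul_one_sub_inv_mul {D : Matrix n n α} (hD : IsUnit D) (Y : Matrix n n α) :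
    D - Y = D * (1 - D⁻¹ * Y) := by
  rw [Matrix.mul_sub, Matrix.mul_one, ← Matrix.mul_assoc,
    mul_nonsing_inv D ((isUnit_iff_isUnit_det D).mp hD), Matrix.one_mul]

theorem inv_sub_one_eq_inv_mul {X : Matrix n n α} (hX : IsUnit (1 - X)) :
    (1 - X)⁻¹ - 1 = (1 - X)⁻¹ * X := by
  calc (1 - X)⁻¹ - 1 = (1 - X)⁻¹ - (1 - X)⁻¹ * (1 - X) := by
        rw [nonsing_inv_mul (1 - X) ((isUnit_iff_isUnit_det _).mp hX)]
    _ = (1 - X)⁻¹ * X := by rw [Matrix.mul_sub, Matrix.mul_one, sub_sub_cancel]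

end BlockInverse

section Frobenius

variable {l m n 𝕜 : Type*} [Fintype l] [Fintype m] [Fintype n] [RCLike 𝕜]

theorem frobenius_norm_mul_le_of_le {A : Matrix l m 𝕜} {B : Matrix m n 𝕜} {r s : ℝ}
    (hA : ‖A‖ ≤ r) (hB : ‖B‖ ≤ s) : ‖A * B‖ ≤ r * s :=
  (frobenius_norm_mul A B).trans (mul_le_mul hA hB (norm_nonneg _) ((norm_nonneg _).trans hA))

variable [DecidableEq l] [DecidableEq n]

theorem norm_inv_fromBlocks_sub_le {A : Matrix l l 𝕜} {B : Matrix l n 𝕜} {C : Matrix n l 𝕜}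
    {D : Matrix n n 𝕜} (hA : IsUnit A) (hD : IsUnit D) {a b c d : ℝ} (ha : ‖A⁻¹‖ ≤ a)
    (hb : ‖B‖ ≤ b) (hc : ‖C‖ ≤ c) (hd : ‖D⁻¹‖ ≤ d) (hsmall : d * (c * a * b) ≤ 1 / 2) :
    IsUnit (fromBlocks A B C D) ∧
      ‖(fromBlocks A B C D)⁻¹.toBlocks₁₁ - A⁻¹‖ ≤
        a * b * ((‖(1 : Matrix n n 𝕜)‖ + 1) * d) * c * a ∧
      ‖(fromBlocks A B C D)⁻¹.toBlocks₁₂‖ ≤ a * b * ((‖(1 : Matrix n n 𝕜)‖ + 1) * d) ∧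
      ‖(fromBlocks A B C D)⁻¹.toBlocks₂₂ - D⁻¹‖ ≤
        (‖(1 : Matrix n n 𝕜)‖ + 1) * (d * (c * a * b)) * d := by
  set X := D⁻¹ * (C * A⁻¹ * B)
  have hX : ‖X‖ ≤ d * (c * a * b) :=
    frobenius_norm_mul_le_of_le hd
      (frobenius_norm_mul_le_of_le (frobenius_norm_mul_le_of_le hc ha) hb)
  have hX1 : IsUnit (1 - X) := isUnit_one_sub_of_norm_lt_one (by linarith)
  have hR : ‖(1 - X)⁻¹‖ ≤ ‖(1 : Matrix n n 𝕜)‖ + 1 := by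
    rw [nonsing_inv_eq_ringInverse]; exact norm_ringInverse_one_sub_le (hX.trans hsmall)
  have hSchur : D - C * A⁻¹ * B = D * (1 - X) := sub_eq_mul_one_sub_inv_mul hD _
  have hS : IsUnit (D - C * A⁻¹ * B) := hSchur ▸ hD.mul hX1
  have hSinv : (D - C * A⁻¹ * B)⁻¹ = (1 - X)⁻¹ * D⁻¹ := by rw [hSchur, mul_inv_rev]
  have hSn : ‖(D - C * A⁻¹ * B)⁻¹‖ ≤ (‖(1 : Matrix n n 𝕜)‖ + 1) * d :=
    hSinv ▸ frobenius_norm_mul_le_of_le hR hd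
  have hSD : (D - C * A⁻¹ * B)⁻¹ - D⁻¹ = (1 - X)⁻¹ * X * D⁻¹ := by
    rw [hSinv, ← inv_sub_one_eq_inv_mul hX1, Matrix.sub_mul, Matrix.one_mul]
  rw [inv_fromBlocks_of_isUnit₁₁ hA hS, toBlocks_fromBlocks₁₁, toBlocks_fromBlocks₁₂,
    toBlocks_fromBlocks₂₂, add_sub_cancel_left, norm_neg, hSD]
  refine ⟨isUnit_fromBlocks_of_isUnit₁₁ hA hS, ?_, ?_, ?_⟩
  · exact frobenius_norm_mul_le_of_le (frobenius_norm_mul_le_of_le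
      (frobenius_norm_mul_le_of_le (frobenius_norm_mul_le_of_le ha hb) hSn) hc) ha
  · exact frobenius_norm_mul_le_of_le (frobenius_norm_mul_le_of_le ha hb) hSn
  · exact frobenius_norm_mul_le_of_le (frobenius_norm_mul_le_of_le hR hX) hd

end Frobenius

end Matrix

theorem frob_eq_norm {m : ℕ} (M : Matrix (Fin m) (Fin m) ℝ) : frob M = ‖M‖ := by
  simp only [frob, frobenius_norm_def, Real.norm_eq_abs, Real.sqrt_eq_rpow, Real.rpow_two, sq_abs]

theorem stmt_3_general (m : ℕ) :
    ∃ γbar K : ℝ, 1 < γbar ∧ 1 < K ∧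
      ∀ (θ γ : ℝ) (A B C D : Matrix (Fin m) (Fin m) ℝ),
        0 < θ → θ < 1 → 1 < γ → IsUnit A → IsUnit D →
        frob A⁻¹ ≤ 1 / (θ * γ) → frob B + frob C + frob D⁻¹ ≤ 1 / θ →
        γbar / θ ^ 4 ≤ γ →
        IsUnit (Matrix.fromBlocks A B C D) ∧
        frob ((Matrix.fromBlocks A B C D)⁻¹.toBlocks₁₁ - A⁻¹) ≤ K / (θ ^ 5 * γ ^ 2) ∧
        frob ((Matrix.fromBlocks A B C D)⁻¹.toBlocks₁₂) ≤ K / (θ ^ 3 * γ) ∧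
        frob ((Matrix.fromBlocks A B C D)⁻¹.toBlocks₂₂ - D⁻¹) ≤ K / (θ ^ 5 * γ) := by
  refine ⟨2, frob (1 : Matrix (Fin m) (Fin m) ℝ) + 2, one_lt_two,
    by rw [frob_eq_norm]; linarith [norm_nonneg (1 : Matrix (Fin m) (Fin m) ℝ)], ?_⟩
  intro θ γ A B C D hθ _ hγ hA hD ha hbcd hγbar
  simp only [frob_eq_norm] at ha hbcd ⊢
  have hγ0 : 0 < γ := one_pos.trans hγ
  have hb : ‖B‖ ≤ 1 / θ := by linarith [norm_nonneg C, norm_nonneg D⁻¹]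
  have hc : ‖C‖ ≤ 1 / θ := by linarith [norm_nonneg B, norm_nonneg D⁻¹]
  have hd : ‖D⁻¹‖ ≤ 1 / θ := by linarith [norm_nonneg B, norm_nonneg C]
  have hsmall : 1 / θ * (1 / θ * (1 / (θ * γ)) * (1 / θ)) ≤ 1 / 2 := by
    have : 2 ≤ θ ^ 4 * γ := by rwa [div_le_iff₀ (by positivity), mul_comm] at hγbar
    calc _ = 1 / (θ ^ 4 * γ) := by field_simp
      _ ≤ 1 / 2 := by gcongr
  obtain ⟨hM, h11, h12, h22⟩ := norm_inv_fromBlocks_sub_le hA hD ha hb hc hd hsmall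
  have hK : ∀ {x Q : ℝ}, 0 < Q → x = (‖(1 : Matrix (Fin m) (Fin m) ℝ)‖ + 1) / Q →
      x ≤ (‖(1 : Matrix (Fin m) (Fin m) ℝ)‖ + 2) / Q := fun hQ hx => hx ▸ by gcongr; linarith
  exact ⟨hM, h11.trans (hK (by positivity) (by field_simp)),
    h12.trans (hK (by positivity) (by field_simp)), h22.trans (hK (by positivity) (by field_simp))⟩

theorem stmt_3 (m : ℕ) (hm : 1 ≤ m) :
    ∃ γbar K : ℝ, 1 < γbar ∧ 1 < K ∧
      ∀ (θ γ : ℝ) (A B C D : Matrix (Fin m) (Fin m) ℝ),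
        0 < θ → θ < 1 → 1 < γ → IsUnit A → IsUnit D →
        frob A⁻¹ ≤ 1 / (θ * γ) → frob B + frob C + frob D⁻¹ ≤ 1 / θ →
        γbar / θ ^ 4 ≤ γ →
        IsUnit (Matrix.fromBlocks A B C D) ∧
        frob ((Matrix.fromBlocks A B C D)⁻¹.toBlocks₁₁ - A⁻¹) ≤ K / (θ ^ 5 * γ ^ 2) ∧
        frob ((Matrix.fromBlocks A B C D)⁻¹.toBlocks₁₂) ≤ K / (θ ^ 3 * γ) ∧
        frob ((Matrix.fromBlocks A B C D)⁻¹.toBlocks₂₂ - D⁻¹) ≤ K / (θ ^ 5 * γ) :=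
  stmt_3_general m
end

section
/- Define ū(x', x₃) = (x₃ − h₂(x') + ε/2)/(ε + h₁(x') − h₂(x')) on the narrow region Ω_R = {|x'| < R, −ε/2 + h₂(x') < x₃ < ε/2 + h₁(x')} with h₁, h₂ as above (in particular C^{2} with the relative convexity h₁ − h₂ ≥ κ₀|x'|²). Then for k, l = 1, 2: |∂_{x_k x_l} ū(x)| ≤ C/(ε + |x'|²), |∂_{x_k x₃} ū(x)| ≤ C|x'|/(ε + |x'|²)², and ∂_{x₃ x₃} ū(x) = 0, for all x ∈ Ω_R, with C independent of ε. -/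
/-!
Write g = ε + h₁ - h₂, so that ū = (x₃ - h₂ + ε/2)/g. The quotient rule gives
∂_{(u,s)} ū = (s - ∂_u h₂ - ū ∂_u g)/g; in particular ∂₃ū = 1/g does not depend on x₃.
Differentiating once more writes every second derivative as a combination of ū, ∇ū, ∇h_i
and ∇²h_i divided by g. In the narrow region 0 < ū < 1, and the C² bounds together
with ∇h_i(0) = 0 give |∇h_i(x')| ≤ C₁|x'|; hence the tangential second derivatives are
O(1/g + |x'|²/g²) and the mixed ones O(|x'|/g²). Relative convexity gives g ≥ ε and
g ≥ κ₀|x'|², hence |x'|²/g ≤ 1/κ₀ and 1/g ≤ (1 + 1/κ₀)/(ε + |x'|²).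
-/

/-- The auxiliary function ū on the narrow region, as a function of (x', x₃). -/
noncomputable def ubar (ε : ℝ) (h₁ h₂ : EuclideanSpace ℝ (Fin 2) → ℝ)
    (p : EuclideanSpace ℝ (Fin 2) × ℝ) : ℝ :=
  (p.2 - h₂ p.1 + ε / 2) / (ε + h₁ p.1 - h₂ p.1)

open Metric ContinuousLinearMap Filter Topology

local notation "E₂" => EuclideanSpace ℝ (Fin 2)

theorem HasFDerivAt.fun_div {𝕜 E : Type*} [NontriviallyNormedField 𝕜] [NormedAddCommGroup E]
    [NormedSpace 𝕜 E] {c d : E → 𝕜} {c' d' : E →L[𝕜] 𝕜} {x : E}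
    (hc : HasFDerivAt c c' x) (hd : HasFDerivAt d d' x) (hx : d x ≠ 0) :
    HasFDerivAt (fun y => c y / d y) ((d x)⁻¹ • (c' - (c x / d x) • d')) x := by
  simp only [div_eq_mul_inv]
  refine (hc.fun_mul ((hasDerivAt_inv hx).comp_hasFDerivAt x hd)).congr_fderiv ?_
  ext v
  simp only [smul_apply, add_apply, sub_apply, smul_eq_mul, Function.comp_apply]
  field_simp
  ring

theorem ContDiffAt.hasFDerivAt_fderiv {𝕜 E F : Type*} [NontriviallyNormedField 𝕜]
    [NormedAddCommGroup E] [NormedSpace 𝕜 E] [NormedAddCommGroup F] [NormedSpace 𝕜 F]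
    {f : E → F} {x : E} (hf : ContDiffAt 𝕜 2 f x) :
    HasFDerivAt (fderiv 𝕜 f) (fderiv 𝕜 (fderiv 𝕜 f) x) x :=
  ((hf.fderiv_right (m := 1) le_rfl).differentiableAt one_ne_zero).hasFDerivAt

theorem ContDiffAt.eventually_differentiableAt {𝕜 E F : Type*} [NontriviallyNormedField 𝕜]
    [NormedAddCommGroup E] [NormedSpace 𝕜 E] [NormedAddCommGroup F] [NormedSpace 𝕜 F]
    {f : E → F} {x : E} {n : WithTop ℕ∞} (hf : ContDiffAt 𝕜 n f x) (hn : 1 ≤ n) :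
    ∀ᶠ y in 𝓝 x, DifferentiableAt 𝕜 f y :=
  ((hf.of_le hn).eventually (by simp)).mono fun _ hy => hy.differentiableAt one_ne_zero

theorem norm_fderiv_le_of_norm_fderiv_fderiv_le {E F : Type*} [NormedAddCommGroup E]
    [NormedSpace ℝ E] [NormedAddCommGroup F] [NormedSpace ℝ F] {f : E → F} {R C : ℝ} {y : E}
    (hf : ContDiffOn ℝ 2 f (ball 0 R)) (hf0 : fderiv ℝ f 0 = 0)
    (bound : ∀ x ∈ ball 0 R, ‖fderiv ℝ (fderiv ℝ f) x‖ ≤ C) (hy : y ∈ ball 0 R) :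
    ‖fderiv ℝ f y‖ ≤ C * ‖y‖ := by
  have hdiff : ∀ x ∈ ball (0 : E) R, DifferentiableAt ℝ (fderiv ℝ f) x := fun x hx =>
    (hf.contDiffAt (isOpen_ball.mem_nhds hx)).hasFDerivAt_fderiv.differentiableAt
  simpa [hf0] using (convex_ball 0 R).norm_image_sub_le_of_norm_fderiv_le hdiff bound
    (mem_ball_self (pos_of_mem_ball hy)) hy

theorem ContinuousLinearMap.abs_apply_le_of_opNorm_le {E : Type*} [NormedAddCommGroup E]
    [NormedSpace ℝ E] (L : E →L[ℝ] ℝ) {u : E} {a : ℝ} (hL : ‖L‖ ≤ a) (hu : ‖u‖ ≤ 1) :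
    |L u| ≤ a := by
  simpa using L.le_of_opNorm_le_of_le hL hu

theorem inv_le_one_add_inv_div {κ ε q g : ℝ} (hκ : 0 < κ) (hε : 0 < ε) (hq : 0 ≤ q)
    (hεg : ε ≤ g) (hqg : κ * q ≤ g) : g⁻¹ ≤ (1 + κ⁻¹) / (ε + q) := by
  have hg : 0 < g := hε.trans_le hεg
  have : q ≤ κ⁻¹ * g := by rw [le_inv_mul_iff₀ hκ]; exact hqg
  rw [inv_eq_one_div, div_le_div_iff₀ hg (by positivity)]
  nlinarith

section Ubar

variable {ε : ℝ} {h₁ h₂ : E₂ → ℝ} {x : E₂} {t : ℝ}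

theorem hasFDerivAt_ubar (hh₁ : DifferentiableAt ℝ h₁ x) (hh₂ : DifferentiableAt ℝ h₂ x)
    (hg : ε + h₁ x - h₂ x ≠ 0) :
    HasFDerivAt (ubar ε h₁ h₂)
      ((ε + h₁ x - h₂ x)⁻¹ • (snd ℝ E₂ ℝ - (fderiv ℝ h₂ x).comp (fst ℝ E₂ ℝ) -
        ubar ε h₁ h₂ (x, t) • (fderiv ℝ h₁ x - fderiv ℝ h₂ x).comp (fst ℝ E₂ ℝ))) (x, t) := by
  have hN : HasFDerivAt (fun p : E₂ × ℝ => p.2 - h₂ p.1 + ε / 2)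
      (snd ℝ E₂ ℝ - (fderiv ℝ h₂ x).comp (fst ℝ E₂ ℝ)) (x, t) :=
    (hasFDerivAt_snd.sub (hh₂.hasFDerivAt.comp (x, t) hasFDerivAt_fst)).add_const _
  have hD : HasFDerivAt (fun p : E₂ × ℝ => ε + h₁ p.1 - h₂ p.1)
      ((fderiv ℝ h₁ x - fderiv ℝ h₂ x).comp (fst ℝ E₂ ℝ)) (x, t) :=
    ((hh₁.hasFDerivAt.comp (x, t) hasFDerivAt_fst).const_add ε).sub
      (hh₂.hasFDerivAt.comp (x, t) hasFDerivAt_fst)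
  exact hN.fun_div hD hg

theorem fderiv_ubar_apply (hh₁ : DifferentiableAt ℝ h₁ x) (hh₂ : DifferentiableAt ℝ h₂ x)
    (hg : ε + h₁ x - h₂ x ≠ 0) (u : E₂) (s : ℝ) :
    fderiv ℝ (ubar ε h₁ h₂) (x, t) (u, s) =
      (s - fderiv ℝ h₂ x u - ubar ε h₁ h₂ (x, t) * (fderiv ℝ h₁ x u - fderiv ℝ h₂ x u)) /
        (ε + h₁ x - h₂ x) := by
  rw [(hasFDerivAt_ubar hh₁ hh₂ hg).fderiv]
  simp only [smul_apply, sub_apply, comp_apply, coe_fst', coe_snd', smul_eq_mul]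
  ring

theorem hasFDerivAt_fderiv_apply_fst {f : E₂ → ℝ} (hf : ContDiffAt ℝ 2 f x) (u : E₂) :
    HasFDerivAt (fun p : E₂ × ℝ => fderiv ℝ f p.1 u)
      (((apply ℝ ℝ u).comp (fderiv ℝ (fderiv ℝ f) x)).comp (fst ℝ E₂ ℝ)) (x, t) :=
  ((apply ℝ ℝ u).hasFDerivAt.comp x hf.hasFDerivAt_fderiv).comp (f := Prod.fst) (x, t)
    hasFDerivAt_fst

theorem fderiv_fderiv_ubar_apply (hh₁ : ContDiffAt ℝ 2 h₁ x) (hh₂ : ContDiffAt ℝ 2 h₂ x)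
    (hg : ε + h₁ x - h₂ x ≠ 0) (u v : E₂) (s r : ℝ) :
    fderiv ℝ (fun p => fderiv ℝ (ubar ε h₁ h₂) p (u, s)) (x, t) (v, r) =
      -(fderiv ℝ (fderiv ℝ h₂) x v u
        + fderiv ℝ (ubar ε h₁ h₂) (x, t) (v, r) * (fderiv ℝ h₁ x u - fderiv ℝ h₂ x u)
        + ubar ε h₁ h₂ (x, t) * (fderiv ℝ (fderiv ℝ h₁) x v u - fderiv ℝ (fderiv ℝ h₂) x v u)
        + fderiv ℝ (ubar ε h₁ h₂) (x, t) (u, s) * (fderiv ℝ h₁ x v - fderiv ℝ h₂ x v))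
      / (ε + h₁ x - h₂ x) := by
  have hd₁ := hh₁.differentiableAt two_ne_zero
  have hd₂ := hh₂.differentiableAt two_ne_zero
  have hnear : ∀ᶠ y in 𝓝 x,
      DifferentiableAt ℝ h₁ y ∧ DifferentiableAt ℝ h₂ y ∧ ε + h₁ y - h₂ y ≠ 0 :=
    (hh₁.eventually_differentiableAt one_le_two).and <|
      (hh₂.eventually_differentiableAt one_le_two).and <|
        ((continuousAt_const.add hd₁.continuousAt).sub hd₂.continuousAt).eventually_ne hg
  have hfirst : (fun p => fderiv ℝ (ubar ε h₁ h₂) p (u, s)) =ᶠ[𝓝 (x, t)] fun p =>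
      (s - fderiv ℝ h₂ p.1 u - ubar ε h₁ h₂ p * (fderiv ℝ h₁ p.1 u - fderiv ℝ h₂ p.1 u)) /
        (ε + h₁ p.1 - h₂ p.1) := by
    filter_upwards [continuousAt_fst.eventually hnear] with p hp
    exact fderiv_ubar_apply hp.1 hp.2.1 hp.2.2 u s
  have hD : HasFDerivAt (fun p : E₂ × ℝ => ε + h₁ p.1 - h₂ p.1)
      ((fderiv ℝ h₁ x - fderiv ℝ h₂ x).comp (fst ℝ E₂ ℝ)) (x, t) :=
    ((hd₁.hasFDerivAt.comp (x, t) hasFDerivAt_fst).const_add ε).sub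
      (hd₂.hasFDerivAt.comp (x, t) hasFDerivAt_fst)
  have hN : HasFDerivAt (fun p => s - fderiv ℝ h₂ p.1 u -
      ubar ε h₁ h₂ p * (fderiv ℝ h₁ p.1 u - fderiv ℝ h₂ p.1 u)) _ (x, t) :=
    ((hasFDerivAt_const s (x, t)).fun_sub (hasFDerivAt_fderiv_apply_fst hh₂ u)).fun_sub
      ((hasFDerivAt_ubar hd₁ hd₂ hg).differentiableAt.hasFDerivAt.fun_mul
        ((hasFDerivAt_fderiv_apply_fst hh₁ u).fun_sub (hasFDerivAt_fderiv_apply_fst hh₂ u)))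
  rw [hfirst.fderiv_eq, (hN.fun_div hD hg).fderiv, fderiv_ubar_apply hd₁ hd₂ hg u s]
  simp only [smul_apply, sub_apply, add_apply, comp_apply, coe_fst', apply_apply, smul_eq_mul,
    zero_apply]
  field_simp
  ring

theorem fderiv_fderiv_ubar_vertical_apply (hh₁ : ContDiffAt ℝ 2 h₁ x)
    (hh₂ : ContDiffAt ℝ 2 h₂ x) (hg : ε + h₁ x - h₂ x ≠ 0) (v : E₂) (r : ℝ) :
    fderiv ℝ (fun p => fderiv ℝ (ubar ε h₁ h₂) p (0, 1)) (x, t) (v, r) =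
      -(fderiv ℝ h₁ x v - fderiv ℝ h₂ x v) / (ε + h₁ x - h₂ x) ^ 2 := by
  rw [fderiv_fderiv_ubar_apply hh₁ hh₂ hg, fderiv_ubar_apply (hh₁.differentiableAt two_ne_zero)
    (hh₂.differentiableAt two_ne_zero) hg 0 1]
  simp only [map_zero, sub_zero, mul_zero, zero_add]
  field_simp

theorem abs_ubar_le_one (ht₁ : -ε / 2 + h₂ x < t) (ht₂ : t < ε / 2 + h₁ x) :
    |ubar ε h₁ h₂ (x, t)| ≤ 1 := by
  have hg : 0 < ε + h₁ x - h₂ x := by linarith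
  rw [ubar, abs_div, abs_of_pos hg, div_le_one hg, abs_le]
  constructor <;> linarith

section Bounds

variable {ρ C₁ : ℝ} {u v : E₂}

theorem abs_fderiv_ubar_le (hh₁ : DifferentiableAt ℝ h₁ x) (hh₂ : DifferentiableAt ℝ h₂ x)
    (hg : 0 < ε + h₁ x - h₂ x) (hu₀ : |ubar ε h₁ h₂ (x, t)| ≤ 1)
    (hρ₁ : ‖fderiv ℝ h₁ x‖ ≤ ρ) (hρ₂ : ‖fderiv ℝ h₂ x‖ ≤ ρ) (hu : ‖u‖ ≤ 1) :
    |fderiv ℝ (ubar ε h₁ h₂) (x, t) (u, 0)| ≤ 3 * ρ / (ε + h₁ x - h₂ x) := by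
  rw [fderiv_ubar_apply hh₁ hh₂ hg.ne', abs_div, abs_of_pos hg]
  gcongr
  have ha₁ := (fderiv ℝ h₁ x).abs_apply_le_of_opNorm_le hρ₁ hu
  have ha₂ := (fderiv ℝ h₂ x).abs_apply_le_of_opNorm_le hρ₂ hu
  calc |0 - fderiv ℝ h₂ x u - ubar ε h₁ h₂ (x, t) * (fderiv ℝ h₁ x u - fderiv ℝ h₂ x u)|
      ≤ |fderiv ℝ h₂ x u| + |ubar ε h₁ h₂ (x, t)| * |fderiv ℝ h₁ x u - fderiv ℝ h₂ x u| := by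
        rw [zero_sub, ← abs_mul, ← abs_neg (fderiv ℝ h₂ x u)]
        exact abs_sub _ _
    _ ≤ ρ + 1 * (ρ + ρ) := by gcongr; exact (abs_sub _ _).trans (add_le_add ha₁ ha₂)
    _ = 3 * ρ := by ring

theorem abs_fderiv_fderiv_ubar_le (hh₁ : ContDiffAt ℝ 2 h₁ x) (hh₂ : ContDiffAt ℝ 2 h₂ x)
    (hg : 0 < ε + h₁ x - h₂ x) (hu₀ : |ubar ε h₁ h₂ (x, t)| ≤ 1)
    (hρ₁ : ‖fderiv ℝ h₁ x‖ ≤ ρ) (hρ₂ : ‖fderiv ℝ h₂ x‖ ≤ ρ)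
    (hC₁ : ‖fderiv ℝ (fderiv ℝ h₁) x‖ ≤ C₁) (hC₂ : ‖fderiv ℝ (fderiv ℝ h₂) x‖ ≤ C₁)
    (hu : ‖u‖ ≤ 1) (hv : ‖v‖ ≤ 1) :
    |fderiv ℝ (fun p => fderiv ℝ (ubar ε h₁ h₂) p (u, 0)) (x, t) (v, 0)| ≤
      (3 * C₁ + 12 * (ρ ^ 2 / (ε + h₁ x - h₂ x))) / (ε + h₁ x - h₂ x) := by
  set g := ε + h₁ x - h₂ x
  have hd₁ := hh₁.differentiableAt two_ne_zero
  have hd₂ := hh₂.differentiableAt two_ne_zero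
  have hρ : 0 ≤ ρ := (norm_nonneg _).trans hρ₁
  have hDu : |fderiv ℝ h₁ x u - fderiv ℝ h₂ x u| ≤ ρ + ρ := (abs_sub _ _).trans <| add_le_add
    ((fderiv ℝ h₁ x).abs_apply_le_of_opNorm_le hρ₁ hu)
    ((fderiv ℝ h₂ x).abs_apply_le_of_opNorm_le hρ₂ hu)
  have hDv : |fderiv ℝ h₁ x v - fderiv ℝ h₂ x v| ≤ ρ + ρ := (abs_sub _ _).trans <| add_le_add
    ((fderiv ℝ h₁ x).abs_apply_le_of_opNorm_le hρ₁ hv)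
    ((fderiv ℝ h₂ x).abs_apply_le_of_opNorm_le hρ₂ hv)
  have hH₁ := (fderiv ℝ (fderiv ℝ h₁) x v).abs_apply_le_of_opNorm_le
    (by simpa using (fderiv ℝ (fderiv ℝ h₁) x).le_of_opNorm_le_of_le hC₁ hv) hu
  have hH₂ := (fderiv ℝ (fderiv ℝ h₂) x v).abs_apply_le_of_opNorm_le
    (by simpa using (fderiv ℝ (fderiv ℝ h₂) x).le_of_opNorm_le_of_le hC₂ hv) hu
  have hūv := abs_fderiv_ubar_le hd₁ hd₂ hg hu₀ hρ₁ hρ₂ hv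
  have hūu := abs_fderiv_ubar_le hd₁ hd₂ hg hu₀ hρ₁ hρ₂ hu
  rw [fderiv_fderiv_ubar_apply hh₁ hh₂ hg.ne', abs_div, abs_neg, abs_of_pos hg]
  gcongr
  calc _ ≤ |fderiv ℝ (fderiv ℝ h₂) x v u|
        + |fderiv ℝ (ubar ε h₁ h₂) (x, t) (v, 0)| * |fderiv ℝ h₁ x u - fderiv ℝ h₂ x u|
        + |ubar ε h₁ h₂ (x, t)| *
          |fderiv ℝ (fderiv ℝ h₁) x v u - fderiv ℝ (fderiv ℝ h₂) x v u|
        + |fderiv ℝ (ubar ε h₁ h₂) (x, t) (u, 0)| * |fderiv ℝ h₁ x v - fderiv ℝ h₂ x v| := by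
        simp only [← abs_mul]
        exact (abs_add_le _ _).trans
          (add_le_add ((abs_add_le _ _).trans (add_le_add (abs_add_le _ _) le_rfl)) le_rfl)
    _ ≤ C₁ + 3 * ρ / g * (ρ + ρ) + 1 * (C₁ + C₁) + 3 * ρ / g * (ρ + ρ) := by
        gcongr
        exact (abs_sub _ _).trans (add_le_add hH₁ hH₂)
    _ = 3 * C₁ + 12 * (ρ ^ 2 / g) := by ring

theorem abs_fderiv_fderiv_ubar_le_div {κ₀ : ℝ} (hh₁ : ContDiffAt ℝ 2 h₁ x)
    (hh₂ : ContDiffAt ℝ 2 h₂ x) (hκ : 0 < κ₀) (hε : 0 < ε)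
    (hconv : κ₀ * ‖x‖ ^ 2 ≤ h₁ x - h₂ x) (ht₁ : -ε / 2 + h₂ x < t) (ht₂ : t < ε / 2 + h₁ x)
    (hρ₁ : ‖fderiv ℝ h₁ x‖ ≤ C₁ * ‖x‖) (hρ₂ : ‖fderiv ℝ h₂ x‖ ≤ C₁ * ‖x‖)
    (hC₁ : ‖fderiv ℝ (fderiv ℝ h₁) x‖ ≤ C₁) (hC₂ : ‖fderiv ℝ (fderiv ℝ h₂) x‖ ≤ C₁)
    (hu : ‖u‖ ≤ 1) (hv : ‖v‖ ≤ 1) :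
    |fderiv ℝ (fun p => fderiv ℝ (ubar ε h₁ h₂) p (u, 0)) (x, t) (v, 0)| ≤
      (3 * C₁ + 12 * (C₁ ^ 2 / κ₀)) * (1 + κ₀⁻¹) / (ε + ‖x‖ ^ 2) := by
  have hg : 0 < ε + h₁ x - h₂ x := by linarith
  have hx : (C₁ * ‖x‖) ^ 2 / (ε + h₁ x - h₂ x) ≤ C₁ ^ 2 / κ₀ := by
    rw [div_le_div_iff₀ hg hκ]; nlinarith [sq_nonneg C₁, sq_nonneg ‖x‖]
  calc _ ≤ (3 * C₁ + 12 * ((C₁ * ‖x‖) ^ 2 / (ε + h₁ x - h₂ x))) / (ε + h₁ x - h₂ x) :=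
        abs_fderiv_fderiv_ubar_le hh₁ hh₂ hg (abs_ubar_le_one ht₁ ht₂) hρ₁ hρ₂ hC₁ hC₂ hu hv
    _ ≤ (3 * C₁ + 12 * (C₁ ^ 2 / κ₀)) * (1 + κ₀⁻¹) / (ε + ‖x‖ ^ 2) := by
        have hC₁₀ : 0 ≤ C₁ := (norm_nonneg (fderiv ℝ (fderiv ℝ h₁) x)).trans hC₁
        have hinv : (ε + h₁ x - h₂ x)⁻¹ ≤ (1 + κ₀⁻¹) / (ε + ‖x‖ ^ 2) :=
          inv_le_one_add_inv_div hκ hε (by positivity) (by nlinarith) (by linarith)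
        rw [div_eq_mul_inv, mul_div_assoc]
        gcongr

theorem abs_fderiv_fderiv_ubar_vertical_le_div {κ₀ : ℝ} (hh₁ : ContDiffAt ℝ 2 h₁ x)
    (hh₂ : ContDiffAt ℝ 2 h₂ x) (hκ : 0 < κ₀) (hε : 0 < ε)
    (hconv : κ₀ * ‖x‖ ^ 2 ≤ h₁ x - h₂ x)
    (hρ₁ : ‖fderiv ℝ h₁ x‖ ≤ C₁ * ‖x‖) (hρ₂ : ‖fderiv ℝ h₂ x‖ ≤ C₁ * ‖x‖) (hv : ‖v‖ ≤ 1) :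
    |fderiv ℝ (fun p => fderiv ℝ (ubar ε h₁ h₂) p (0, 1)) (x, t) (v, 0)| ≤
      2 * C₁ * (1 + κ₀⁻¹) ^ 2 * ‖x‖ / (ε + ‖x‖ ^ 2) ^ 2 := by
  have hq : 0 ≤ κ₀ * ‖x‖ ^ 2 := by positivity
  have hg : 0 < ε + h₁ x - h₂ x := by linarith
  have hDv : |fderiv ℝ h₁ x v - fderiv ℝ h₂ x v| ≤ 2 * C₁ * ‖x‖ := by
    linarith [abs_sub (fderiv ℝ h₁ x v) (fderiv ℝ h₂ x v),
      (fderiv ℝ h₁ x).abs_apply_le_of_opNorm_le hρ₁ hv,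
      (fderiv ℝ h₂ x).abs_apply_le_of_opNorm_le hρ₂ hv]
  rw [fderiv_fderiv_ubar_vertical_apply hh₁ hh₂ hg.ne', abs_div, abs_neg, abs_sq,
    div_eq_mul_inv, ← inv_pow]
  have hinv : (ε + h₁ x - h₂ x)⁻¹ ≤ (1 + κ₀⁻¹) / (ε + ‖x‖ ^ 2) :=
    inv_le_one_add_inv_div hκ hε (by positivity) (by linarith) (by linarith)
  calc _ ≤ 2 * C₁ * ‖x‖ * ((1 + κ₀⁻¹) / (ε + ‖x‖ ^ 2)) ^ 2 := by
        gcongr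
        exact (abs_nonneg _).trans hDv
    _ = 2 * C₁ * (1 + κ₀⁻¹) ^ 2 * ‖x‖ / (ε + ‖x‖ ^ 2) ^ 2 := by rw [div_pow]; ring

end Bounds

end Ubar

theorem stmt_18 (κ₀ C₁ : ℝ) (hκ : 0 < κ₀) (hC₁ : 0 < C₁) :
    ∃ C : ℝ, 0 < C ∧
      ∀ (ε R : ℝ) (h₁ h₂ : EuclideanSpace ℝ (Fin 2) → ℝ),
        0 < ε → 0 < R →
        ContDiffOn ℝ 2 h₁ (Metric.ball 0 R) → ContDiffOn ℝ 2 h₂ (Metric.ball 0 R) →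
        h₁ 0 = 0 → h₂ 0 = 0 → fderiv ℝ h₁ 0 = 0 → fderiv ℝ h₂ 0 = 0 →
        (∀ y ∈ Metric.ball (0 : EuclideanSpace ℝ (Fin 2)) R,
          |h₁ y| + ‖fderiv ℝ h₁ y‖ + ‖fderiv ℝ (fderiv ℝ h₁) y‖ ≤ C₁ ∧
          |h₂ y| + ‖fderiv ℝ h₂ y‖ + ‖fderiv ℝ (fderiv ℝ h₂) y‖ ≤ C₁) →
        (∀ y ∈ Metric.ball (0 : EuclideanSpace ℝ (Fin 2)) R,
          κ₀ * ‖y‖ ^ 2 ≤ h₁ y - h₂ y) →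
        ∀ (y : EuclideanSpace ℝ (Fin 2)) (t : ℝ),
          y ∈ Metric.ball (0 : EuclideanSpace ℝ (Fin 2)) R →
          -ε / 2 + h₂ y < t → t < ε / 2 + h₁ y →
          (∀ k l : Fin 2,
            |fderiv ℝ (fun p => fderiv ℝ (ubar ε h₁ h₂) p (EuclideanSpace.single l 1, 0))
                (y, t) (EuclideanSpace.single k 1, 0)| ≤ C / (ε + ‖y‖ ^ 2)) ∧
          (∀ k : Fin 2,
            |fderiv ℝ (fun p => fderiv ℝ (ubar ε h₁ h₂) p (0, 1))
                (y, t) (EuclideanSpace.single k 1, 0)| ≤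
              C * ‖y‖ / (ε + ‖y‖ ^ 2) ^ 2) ∧
          fderiv ℝ (fun p => fderiv ℝ (ubar ε h₁ h₂) p (0, 1)) (y, t) (0, 1) = 0 := by
  refine ⟨(3 * C₁ + 12 * (C₁ ^ 2 / κ₀)) * (1 + κ₀⁻¹) + 2 * C₁ * (1 + κ₀⁻¹) ^ 2,
    by positivity, ?_⟩
  intro ε R h₁ h₂ hε _ hh₁ hh₂ _ _ hd₁ hd₂ hbd hconv y t hy ht₁ ht₂
  have hc₁ : ContDiffAt ℝ 2 h₁ y := hh₁.contDiffAt (isOpen_ball.mem_nhds hy)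
  have hc₂ : ContDiffAt ℝ 2 h₂ y := hh₂.contDiffAt (isOpen_ball.mem_nhds hy)
  have hH₁ : ∀ x ∈ ball (0 : E₂) R, ‖fderiv ℝ (fderiv ℝ h₁) x‖ ≤ C₁ := fun x hx => by
    linarith [(hbd x hx).1, abs_nonneg (h₁ x), norm_nonneg (fderiv ℝ h₁ x)]
  have hH₂ : ∀ x ∈ ball (0 : E₂) R, ‖fderiv ℝ (fderiv ℝ h₂) x‖ ≤ C₁ := fun x hx => by
    linarith [(hbd x hx).2, abs_nonneg (h₂ x), norm_nonneg (fderiv ℝ h₂ x)]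
  have hρ₁ := norm_fderiv_le_of_norm_fderiv_fderiv_le hh₁ hd₁ hH₁ hy
  have hρ₂ := norm_fderiv_le_of_norm_fderiv_fderiv_le hh₂ hd₂ hH₂ hy
  have hg : ε + h₁ y - h₂ y ≠ 0 := by linarith
  refine ⟨fun k l => ?_, fun k => ?_, by simp [fderiv_fderiv_ubar_vertical_apply hc₁ hc₂ hg]⟩
  · refine (abs_fderiv_fderiv_ubar_le_div hc₁ hc₂ hκ hε (hconv y hy) ht₁ ht₂ hρ₁ hρ₂
      (hH₁ y hy) (hH₂ y hy) (by simp) (by simp)).trans ?_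
    gcongr
    exact le_add_of_nonneg_right (by positivity)
  · refine (abs_fderiv_fderiv_ubar_vertical_le_div hc₁ hc₂ hκ hε (hconv y hy) hρ₁ hρ₂
      (by simp)).trans ?_
    gcongr
    exact le_add_of_nonneg_left (by positivity)
end
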